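/- arXiv:2301.07090 — 8 statements merged into one kernel-verified Lean document; each statement's English description precedes it below -/
import Mathlib

section
/- Let n ≥ 2 and 1 ≤ k ≤ n−1. For every permutation w of {1,…,n} with w⁻¹(k) < w⁻¹(k+1), there exist a unique permutation σ with σ(k) = k and σ(k+1) = k+1 and a unique pair (i,j) with 1 ≤ i < j ≤ n such that w = σ ∘ τ^{n,k}_{i,j}. In other words, composition gives a bijection from Ĝ_k × X_{n,k} onto {w ∈ S_n : w⁻¹(k) < w⁻¹(k+1)}, where Ĝ_k is the subgroup of permutations fixing both k and k+1 and X_{n,k} = {τ^{n,k}_{i,j} : 1 ≤ i < j ≤ n}. -/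
/-!
`τ^{n,k}_{i,j}` is the permutation with prescribed values at `i` and `j` that is increasing on
the remaining positions. Such a permutation exists (send the complement of `{i, j}` to the
complement of `{k, k+1}` by the increasing bijection) and is unique, because an increasing map
between finite linear orders is determined by its image. Given `w` with `w⁻¹ k < w⁻¹ (k+1)`,
the pair `(i, j)` is forced to be `(w⁻¹ k, w⁻¹ (k+1))`, hence so is `τ`, and then `σ = w τ⁻¹`.
-/

/-- `IsTau k hk i j w` says that the permutation `w` of `{0,…,n-1}` satisfies
`w i = k`, `w j = k+1`, and `w` is strictly increasing on the complement of `{i, j}`.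
(This is the defining property of `τ^{n,k}_{i,j}`, in 0-indexed form.) -/
def IsTau {n : ℕ} (k : ℕ) (hk : k + 1 < n) (i j : Fin n) (w : Equiv.Perm (Fin n)) : Prop :=
  w i = ⟨k, Nat.lt_of_succ_lt hk⟩ ∧ w j = ⟨k + 1, hk⟩ ∧
    ∀ s t : Fin n, s < t → s ≠ i → s ≠ j → t ≠ i → t ≠ j → w s < w t

theorem Finset.eqOn_of_strictMonoOn_of_image_eq {α β : Type*} [LinearOrder α] [LinearOrder β]
    {s : Finset α} {f g : α → β} (hf : StrictMonoOn f s) (hg : StrictMonoOn g s)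
    (hfg : s.image f = s.image g) : Set.EqOn f g s := by
  have hcard : (s.image g).card = s.card := card_image_of_injOn hg.injOn
  have sorted : ∀ h : α → β, StrictMonoOn h s → s.image h = s.image g →
      h ∘ s.orderEmbOfFin rfl = (s.image g).orderEmbOfFin hcard := fun h hh himg ↦
    orderEmbOfFin_unique _ (fun _ ↦ himg ▸ mem_image_of_mem _ (orderEmbOfFin_mem ..))
      fun _ _ hab ↦ hh (orderEmbOfFin_mem ..) (orderEmbOfFin_mem ..)
        ((s.orderEmbOfFin rfl).strictMono hab)
  intro x hx
  obtain ⟨i, rfl⟩ : x ∈ Set.range (s.orderEmbOfFin rfl) := by simpa using hx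
  exact congrFun ((sorted f hf hfg).trans (sorted g hg rfl).symm) i

namespace Equiv.Perm

theorem exists_apply_eq_and_apply_eq {α : Type*} [DecidableEq α] {i j a b : α} (hij : i ≠ j)
    (hab : a ≠ b) : ∃ g : Perm α, g i = a ∧ g j = b := by
  have hj : swap i a j ≠ a := by simpa using (swap i a).injective.ne hij.symm
  exact ⟨swap (swap i a j) b * swap i a, by simp [swap_apply_of_ne_of_ne hj.symm hab], by simp⟩

variable {α : Type*} [Fintype α] [LinearOrder α]

theorem eq_of_eqOn_of_strictMonoOn_compl {s : Finset α} {u v : Perm α} (huv : Set.EqOn u v s)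
    (hu : StrictMonoOn u ↑sᶜ) (hv : StrictMonoOn v ↑sᶜ) : u = v := by
  have image_compl : ∀ w : Perm α, sᶜ.image w = (s.image w)ᶜ := fun w ↦ by
    rw [← Finset.coe_inj]; push_cast; exact Equiv.image_compl w s
  have himg : sᶜ.image u = sᶜ.image v := by
    rw [image_compl, image_compl, Finset.image_congr huv]
  ext x
  by_cases hx : x ∈ s
  · exact huv hx
  · exact Finset.eqOn_of_strictMonoOn_of_image_eq hu hv himg (by simpa using hx)

theorem exists_eqOn_and_strictMonoOn_compl (s : Finset α) (g : Perm α) :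
    ∃ w : Perm α, Set.EqOn w g s ∧ StrictMonoOn w ↑sᶜ := by
  set t := s.image g
  have hcard : tᶜ.card = sᶜ.card := by
    rw [Finset.card_compl, Finset.card_compl, Finset.card_image_of_injective _ g.injective]
  let e : {x // x ∈ sᶜ} ≃o {x // x ∈ tᶜ} :=
    (sᶜ.orderIsoOfFin rfl).symm.trans (tᶜ.orderIsoOfFin hcard)
  let w : Perm α := Equiv.subtypeCongr e.toEquiv (g.subtypeEquiv fun x ↦ by simp [t])
  refine ⟨w, fun x hx ↦ ?_, fun x hx y hy hxy ↦ ?_⟩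
  · have hx' : x ∉ sᶜ := by simpa using hx
    simp [w, Equiv.subtypeCongr, sumCompl_symm_apply_of_neg hx']
  · rw [Finset.coe_compl, Set.mem_compl_iff, Finset.mem_coe, ← Finset.mem_compl] at hx hy
    simpa [w, Equiv.subtypeCongr, sumCompl_symm_apply_of_pos, hx, hy] using
      e.strictMono (show (⟨x, hx⟩ : {x // x ∈ sᶜ}) < ⟨y, hy⟩ from hxy)

end Equiv.Perm

section IsTau

variable {n k : ℕ} {hk : k + 1 < n} {i j : Fin n} {t t' : Equiv.Perm (Fin n)}

theorem isTau_iff : IsTau k hk i j t ↔ t i = ⟨k, Nat.lt_of_succ_lt hk⟩ ∧ t j = ⟨k + 1, hk⟩ ∧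
    StrictMonoOn t ↑({i, j}ᶜ : Finset (Fin n)) := by
  simp only [IsTau, StrictMonoOn, Finset.coe_compl, Finset.coe_insert, Finset.coe_singleton,
    Set.mem_compl_iff, Set.mem_insert_iff, Set.mem_singleton_iff, not_or]
  grind

theorem IsTau.eq (h : IsTau k hk i j t) (h' : IsTau k hk i j t') : t = t' := by
  rw [isTau_iff] at h h'
  refine Equiv.Perm.eq_of_eqOn_of_strictMonoOn_compl (s := {i, j}) ?_ h.2.2 h'.2.2
  simp [Set.EqOn, h.1, h.2.1, h'.1, h'.2.1]

theorem exists_isTau (hk : k + 1 < n) (hij : i ≠ j) : ∃ t, IsTau k hk i j t := by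
  obtain ⟨g, hgi, hgj⟩ :=
    Equiv.Perm.exists_apply_eq_and_apply_eq (a := ⟨k, Nat.lt_of_succ_lt hk⟩) (b := ⟨k + 1, hk⟩)
      hij (by simp)
  obtain ⟨t, htg, ht⟩ := Equiv.Perm.exists_eqOn_and_strictMonoOn_compl {i, j} g
  exact ⟨t, isTau_iff.2 ⟨(htg (by simp)).trans hgi, (htg (by simp)).trans hgj, ht⟩⟩

end IsTau

theorem stmt3_general (n k : ℕ) (hk : k + 1 < n) (w : Equiv.Perm (Fin n))
    (hw : w⁻¹ ⟨k, Nat.lt_of_succ_lt hk⟩ < w⁻¹ ⟨k + 1, hk⟩) :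
    ∃! x : Equiv.Perm (Fin n) × Equiv.Perm (Fin n) × Fin n × Fin n,
      x.1 ⟨k, Nat.lt_of_succ_lt hk⟩ = ⟨k, Nat.lt_of_succ_lt hk⟩ ∧
      x.1 ⟨k + 1, hk⟩ = ⟨k + 1, hk⟩ ∧
      x.2.2.1 < x.2.2.2 ∧
      IsTau k hk x.2.2.1 x.2.2.2 x.2.1 ∧
      w = x.1 * x.2.1 := by
  obtain ⟨t, ht⟩ := exists_isTau hk hw.ne
  have fixes : ∀ {a}, t (w⁻¹ a) = a → (w * t⁻¹) a = a := fun h ↦ by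
    rw [Equiv.Perm.mul_apply, Equiv.Perm.inv_eq_iff_eq.2 h.symm]
    exact w.apply_symm_apply _
  refine ⟨(w * t⁻¹, t, _, _), ⟨fixes ht.1, fixes ht.2.1, hw, ht, by group⟩, ?_⟩
  rintro ⟨σ, t', i, j⟩ ⟨hσk, hσk1, -, ht', rfl⟩
  dsimp only at hσk hσk1 ht' ht ⊢
  have hi : (σ * t')⁻¹ ⟨k, Nat.lt_of_succ_lt hk⟩ = i := by
    rw [Equiv.Perm.inv_eq_iff_eq, Equiv.Perm.mul_apply, ht'.1, hσk]
  have hj : (σ * t')⁻¹ ⟨k + 1, hk⟩ = j := by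
    rw [Equiv.Perm.inv_eq_iff_eq, Equiv.Perm.mul_apply, ht'.2.1, hσk1]
  rw [hi, hj] at ht ⊢
  obtain rfl := ht'.eq ht
  rw [mul_inv_cancel_right]

/-- Every `w` with `w⁻¹(k) < w⁻¹(k+1)` factors uniquely as `w = σ ∘ τ^{n,k}_{i,j}`
with `σ` fixing `k` and `k+1` and `i < j`: composition is a bijection
`Ĝ_k × X_{n,k} → {w : w⁻¹(k) < w⁻¹(k+1)}`. The unique data is the quadruple
`x = (σ, t, i, j)` where `t = τ^{n,k}_{i,j}` is characterized by `IsTau`. -/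
theorem stmt3 (n k : ℕ) (hn : 2 ≤ n) (hk : k + 1 < n) (w : Equiv.Perm (Fin n))
    (hw : w⁻¹ ⟨k, Nat.lt_of_succ_lt hk⟩ < w⁻¹ ⟨k + 1, hk⟩) :
    ∃! x : Equiv.Perm (Fin n) × Equiv.Perm (Fin n) × Fin n × Fin n,
      x.1 ⟨k, Nat.lt_of_succ_lt hk⟩ = ⟨k, Nat.lt_of_succ_lt hk⟩ ∧
      x.1 ⟨k + 1, hk⟩ = ⟨k + 1, hk⟩ ∧
      x.2.2.1 < x.2.2.2 ∧
      IsTau k hk x.2.2.1 x.2.2.2 x.2.1 ∧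
      w = x.1 * x.2.1 :=
  stmt3_general n k hk w hw
end

section
/- Let n ≥ 2, 1 ≤ k ≤ n−1 and 1 ≤ i ≤ n−1. Let σ be a permutation of {1,…,n} with σ(k) = k and σ(k+1) = k+1, and set w = σ ∘ τ^{n,k}_{i,i+1}. Then (k,k+1) ∘ w = w ∘ (i,i+1), and inv((k,k+1) ∘ w) = inv(w) + 1. -/
/-- The number of inversions of a permutation `w`:
`#{(s,t) : s < t and w s > w t}`; it equals the Coxeter length of `w`. -/
def inversions {n : ℕ} (w : Equiv.Perm (Fin n)) : ℕ :=
  (Finset.univ.filter (fun p : Fin n × Fin n => p.1 < p.2 ∧ w p.2 < w p.1)).card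

/-!
Since `σ` fixes `k` and `k+1`, the permutation `w = σ τ` still sends `i ↦ k` and `i+1 ↦ k+1`.
Swapping two values of `w` is the same as swapping their positions, which gives the
commutation relation. Swapping two *adjacent* values `k < k+1` changes the relative order of
exactly one pair of positions, namely the pair carrying them; as that pair was not an
inversion of `w`, exactly one inversion is created.
-/

open Equiv

lemma Fin.swap_lt_swap_iff_of_succ_eq {n : ℕ} {a b : Fin n} (hab : (a : ℕ) + 1 = b)
    (x y : Fin n) :
    swap a b x < swap a b y ↔ (x < y ∧ ¬(x = a ∧ y = b)) ∨ (x = b ∧ y = a) := by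
  rw [swap_apply_def, swap_apply_def]
  split_ifs <;> simp only [Fin.lt_def, Fin.ext_iff] at * <;> omega

lemma inversions_swap_mul_of_succ_eq {n : ℕ} (w : Perm (Fin n)) {s u : Fin n} (hsu : s < u)
    (hw : (w s : ℕ) + 1 = w u) :
    inversions (swap (w s) (w u) * w) = inversions w + 1 := by
  have hset : Finset.univ.filter
        (fun p : Fin n × Fin n => p.1 < p.2 ∧ (swap (w s) (w u) * w) p.2 < (swap (w s) (w u) * w) p.1)
      = insert (s, u) (Finset.univ.filter (fun p : Fin n × Fin n => p.1 < p.2 ∧ w p.2 < w p.1)) := by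
    ext ⟨x, y⟩
    simp only [Finset.mem_filter, Finset.mem_univ, true_and, Finset.mem_insert, Prod.mk.injEq,
      Perm.mul_apply, Fin.swap_lt_swap_iff_of_succ_eq hw, w.injective.eq_iff]
    constructor
    · rintro ⟨hxy, ⟨hlt, -⟩ | ⟨rfl, rfl⟩⟩
      · exact Or.inr ⟨hxy, hlt⟩
      · exact Or.inl ⟨rfl, rfl⟩
    · rintro (⟨rfl, rfl⟩ | ⟨hxy, hlt⟩)
      · exact ⟨hsu, Or.inr ⟨rfl, rfl⟩⟩
      · refine ⟨hxy, Or.inl ⟨hlt, ?_⟩⟩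
        rintro ⟨rfl, rfl⟩
        exact lt_asymm hxy hsu
  have hsu_not_inv : (s, u) ∉
      Finset.univ.filter (fun p : Fin n × Fin n => p.1 < p.2 ∧ w p.2 < w p.1) := by
    simp only [Finset.mem_filter, Finset.mem_univ, true_and, not_and, not_lt]
    exact fun _ => Fin.le_def.2 (by omega)
  rw [inversions, inversions, hset, Finset.card_insert_of_notMem hsu_not_inv]

theorem stmt4_general (n k i : ℕ) (hk : k + 1 < n) (hi : i + 1 < n)
    (σ t : Equiv.Perm (Fin n))
    (hσ1 : σ ⟨k, Nat.lt_of_succ_lt hk⟩ = ⟨k, Nat.lt_of_succ_lt hk⟩)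
    (hσ2 : σ ⟨k + 1, hk⟩ = ⟨k + 1, hk⟩)
    (ht : IsTau k hk ⟨i, Nat.lt_of_succ_lt hi⟩ ⟨i + 1, hi⟩ t) :
    Equiv.swap ⟨k, Nat.lt_of_succ_lt hk⟩ ⟨k + 1, hk⟩ * (σ * t) =
      (σ * t) * Equiv.swap ⟨i, Nat.lt_of_succ_lt hi⟩ ⟨i + 1, hi⟩ ∧
    inversions (Equiv.swap ⟨k, Nat.lt_of_succ_lt hk⟩ ⟨k + 1, hk⟩ * (σ * t)) =
      inversions (σ * t) + 1 := by
  obtain ⟨ht1, ht2, -⟩ := ht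
  have hw1 : (σ * t) ⟨i, Nat.lt_of_succ_lt hi⟩ = ⟨k, Nat.lt_of_succ_lt hk⟩ := by
    rw [Perm.mul_apply, ht1, hσ1]
  have hw2 : (σ * t) ⟨i + 1, hi⟩ = ⟨k + 1, hk⟩ := by
    rw [Perm.mul_apply, ht2, hσ2]
  rw [← hw1, ← hw2]
  refine ⟨(mul_swap_eq_swap_mul _ _ _).symm, inversions_swap_mul_of_succ_eq _ ?_ ?_⟩
  · exact Fin.lt_def.2 (Nat.lt_succ_self i)
  · rw [hw1, hw2]

/-- If `σ` fixes `k` and `k+1` and `w = σ ∘ τ^{n,k}_{i,i+1}` then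
`(k,k+1) ∘ w = w ∘ (i,i+1)` and `inv((k,k+1) ∘ w) = inv(w) + 1`. -/
theorem stmt4 (n k i : ℕ) (hn : 2 ≤ n) (hk : k + 1 < n) (hi : i + 1 < n)
    (σ t : Equiv.Perm (Fin n))
    (hσ1 : σ ⟨k, Nat.lt_of_succ_lt hk⟩ = ⟨k, Nat.lt_of_succ_lt hk⟩)
    (hσ2 : σ ⟨k + 1, hk⟩ = ⟨k + 1, hk⟩)
    (ht : IsTau k hk ⟨i, Nat.lt_of_succ_lt hi⟩ ⟨i + 1, hi⟩ t) :
    Equiv.swap ⟨k, Nat.lt_of_succ_lt hk⟩ ⟨k + 1, hk⟩ * (σ * t) =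
      (σ * t) * Equiv.swap ⟨i, Nat.lt_of_succ_lt hi⟩ ⟨i + 1, hi⟩ ∧
    inversions (Equiv.swap ⟨k, Nat.lt_of_succ_lt hk⟩ ⟨k + 1, hk⟩ * (σ * t)) =
      inversions (σ * t) + 1 :=
  stmt4_general n k i hk hi σ t hσ1 hσ2 ht
end

section
/- Let n ≥ 2 and let k, j satisfy 1 ≤ k < j ≤ n. Then τ^{n,k}_{k,j} = s_{k+1} s_{k+2} ⋯ s_{j−1} (the empty product being the identity when j = k+1), where the product is composed right to left. -/
/-- The adjacent transposition `s_l = (l, l+1)` (0-indexed), interpreted as the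
identity out of range. -/
def sT (n l : ℕ) : Equiv.Perm (Fin n) :=
  if h : l + 1 < n then Equiv.swap ⟨l, Nat.lt_of_succ_lt h⟩ ⟨l + 1, h⟩ else 1

/-- The product `s_a s_{a+1} ⋯ s_b`, composed right to left (identity if `b < a`). -/
def ascProd (n a b : ℕ) : Equiv.Perm (Fin n) :=
  ((List.range' a (b + 1 - a)).map (sT n)).prod

lemma fix_of_mono {n : ℕ} (σ : Equiv.Perm (Fin n)) (S : Finset (Fin n))
    (hmap : ∀ x ∈ S, σ x ∈ S)
    (hmono : ∀ s ∈ S, ∀ t ∈ S, s < t → σ s < σ t) :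
    ∀ x ∈ S, σ x = x := by
  intro x hx
  by_contra hne
  rcases lt_or_gt_of_ne hne with h | h
  · have hcard : (S.filter (· ≤ x)).card ≤ (S.filter (· ≤ σ x)).card := by
      apply Finset.card_le_card_of_injOn σ
      · intro y hy
        simp only [Finset.mem_coe, Finset.mem_filter] at hy ⊢
        refine ⟨hmap y hy.1, ?_⟩
        rcases eq_or_lt_of_le hy.2 with rfl | hlt
        · exact le_refl _
        · exact le_of_lt (hmono y hy.1 x hx hlt)
      · exact fun a _ b _ hab => σ.injective hab
    have hlt : (S.filter (· ≤ σ x)).card < (S.filter (· ≤ x)).card := by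
      apply Finset.card_lt_card
      constructor
      · intro z hz
        simp only [Finset.mem_filter] at hz ⊢
        exact ⟨hz.1, le_trans hz.2 (le_of_lt h)⟩
      · intro hcon
        have := hcon (Finset.mem_filter.mpr ⟨hx, le_refl x⟩)
        simp only [Finset.mem_filter] at this
        exact absurd this.2 (not_le.mpr h)
    omega
  · have hcard : (S.filter (x ≤ ·)).card ≤ (S.filter (σ x ≤ ·)).card := by
      apply Finset.card_le_card_of_injOn σ
      · intro y hy
        simp only [Finset.mem_coe, Finset.mem_filter] at hy ⊢
        refine ⟨hmap y hy.1, ?_⟩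
        rcases eq_or_lt_of_le hy.2 with rfl | hlt
        · exact le_refl _
        · exact le_of_lt (hmono x hx y hy.1 hlt)
      · exact fun a _ b _ hab => σ.injective hab
    have hlt : (S.filter (σ x ≤ ·)).card < (S.filter (x ≤ ·)).card := by
      apply Finset.card_lt_card
      constructor
      · intro z hz
        simp only [Finset.mem_filter] at hz ⊢
        exact ⟨hz.1, le_trans (le_of_lt h) hz.2⟩
      · intro hcon
        have := hcon (Finset.mem_filter.mpr ⟨hx, le_refl x⟩)
        simp only [Finset.mem_filter] at this
        exact absurd this.2 (not_le.mpr h)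
    omega

lemma sT_apply {n a : ℕ} (ha : a + 1 < n) (y : Fin n) :
    ((sT n a) y : ℕ) = if (y : ℕ) = a then a + 1 else if (y : ℕ) = a + 1 then a else y := by
  simp only [sT, dif_pos ha, Equiv.swap_apply_def]
  split_ifs <;> simp_all [Fin.ext_iff]

lemma prodRange_apply {n : ℕ} : ∀ (len a : ℕ), a + len < n → ∀ x : Fin n,
    ((((List.range' a len).map (sT n)).prod) x : ℕ) =
      if (x : ℕ) = a + len ∧ len ≠ 0 then a
      else if a ≤ (x : ℕ) ∧ (x : ℕ) < a + len then (x : ℕ) + 1 else x := by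
  intro len
  induction len with
  | zero =>
    intro a h x
    simp only [List.range', List.map_nil, List.prod_nil, Equiv.Perm.one_apply]
    split_ifs <;> omega
  | succ m ih =>
    intro a h x
    have hx := x.isLt
    rw [List.range'_succ]
    simp only [List.map_cons, List.prod_cons, Equiv.Perm.mul_apply]
    have hrest := ih (a + 1) (by omega) x
    rw [sT_apply (by omega), hrest]
    split_ifs <;> omega

/-- `τ^{n,k}_{k,j} = s_{k+1} s_{k+2} ⋯ s_{j-1}` (empty product when `j = k+1`). -/
theorem stmt5 (n k j : ℕ) (hn : 2 ≤ n) (hkj : k < j) (hj : j < n) :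
    ∀ w : Equiv.Perm (Fin n),
      IsTau k (by omega) ⟨k, by omega⟩ ⟨j, hj⟩ w ↔ w = ascProd n (k + 1) (j - 1) := by
  intro w
  set p := ascProd n (k + 1) (j - 1) with hpdef
  have hp : ∀ x : Fin n, (p x : ℕ) =
      if (x : ℕ) = k + 1 + (j - 1 + 1 - (k + 1)) ∧ (j - 1 + 1 - (k + 1)) ≠ 0 then k + 1
      else if k + 1 ≤ (x : ℕ) ∧ (x : ℕ) < k + 1 + (j - 1 + 1 - (k + 1)) then (x : ℕ) + 1
      else x :=
    fun x => prodRange_apply (j - 1 + 1 - (k + 1)) (k + 1) (by omega) x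
  have hptau : IsTau k (by omega) ⟨k, by omega⟩ ⟨j, hj⟩ p := by
    refine ⟨?_, ?_, ?_⟩
    · apply Fin.ext
      rw [hp]
      simp only [Fin.val_mk]
      split_ifs <;> omega
    · apply Fin.ext
      rw [hp]
      simp only [Fin.val_mk]
      split_ifs <;> omega
    · intro s t hst hs1 hs2 ht1 ht2
      have hs1' : (s : ℕ) ≠ k := fun h => hs1 (Fin.ext h)
      have hs2' : (s : ℕ) ≠ j := fun h => hs2 (Fin.ext h)
      have ht1' : (t : ℕ) ≠ k := fun h => ht1 (Fin.ext h)
      have ht2' : (t : ℕ) ≠ j := fun h => ht2 (Fin.ext h)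
      have hst' : (s : ℕ) < t := hst
      have hsn := s.isLt
      have htn := t.isLt
      rw [Fin.lt_iff_val_lt_val, hp s, hp t]
      split_ifs <;> omega
  constructor
  · intro hw
    set σ : Equiv.Perm (Fin n) := p⁻¹ * w with hσdef
    have hσk : σ ⟨k, by omega⟩ = ⟨k, by omega⟩ := by
      have : p⁻¹ (p ⟨k, by omega⟩) = ⟨k, by omega⟩ := p.symm_apply_apply _
      rw [hptau.1] at this
      simpa [hσdef, hw.1] using this
    have hσj : σ ⟨j, hj⟩ = ⟨j, hj⟩ := by
      have : p⁻¹ (p ⟨j, hj⟩) = ⟨j, hj⟩ := p.symm_apply_apply _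
      rw [hptau.2.1] at this
      simpa [hσdef, hw.2.1] using this
    set S : Finset (Fin n) := Finset.univ \ {⟨k, by omega⟩, ⟨j, hj⟩} with hSdef
    have hmemS : ∀ x : Fin n, x ∈ S ↔ x ≠ ⟨k, by omega⟩ ∧ x ≠ ⟨j, hj⟩ := by
      intro x
      simp [hSdef, not_or]
    have hmono : ∀ s ∈ S, ∀ t ∈ S, s < t → σ s < σ t := by
      intro s hs t ht hst
      rw [hmemS] at hs ht
      have hws : w s ≠ ⟨k, by omega⟩ := fun h => hs.1 (w.injective (h.trans hw.1.symm))
      have hwsk : w s ≠ ⟨k + 1, by omega⟩ := fun h => hs.2 (w.injective (h.trans hw.2.1.symm))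
      have hwt : w t ≠ ⟨k, by omega⟩ := fun h => ht.1 (w.injective (h.trans hw.1.symm))
      have hwtk : w t ≠ ⟨k + 1, by omega⟩ := fun h => ht.2 (w.injective (h.trans hw.2.1.symm))
      have hwlt : w s < w t := hw.2.2 s t hst hs.1 hs.2 ht.1 ht.2
      -- show p⁻¹ (w s) < p⁻¹ (w t)
      rcases lt_trichotomy (σ s) (σ t) with h | h | h
      · exact h
      · exact absurd ((p⁻¹ * w).injective h) (ne_of_lt hst)
      · exfalso
        have h1 : p (σ t) = w t := by simp [hσdef]
        have h2 : p (σ s) = w s := by simp [hσdef]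
        have hu1 : σ t ≠ ⟨k, by omega⟩ := by
          intro hh; rw [hh, hptau.1] at h1; exact hwt h1.symm
        have hu2 : σ t ≠ ⟨j, hj⟩ := by
          intro hh; rw [hh, hptau.2.1] at h1; exact hwtk h1.symm
        have hv1 : σ s ≠ ⟨k, by omega⟩ := by
          intro hh; rw [hh, hptau.1] at h2; exact hws h2.symm
        have hv2 : σ s ≠ ⟨j, hj⟩ := by
          intro hh; rw [hh, hptau.2.1] at h2; exact hwsk h2.symm
        have := hptau.2.2 (σ t) (σ s) h hu1 hu2 hv1 hv2
        rw [h1, h2] at this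
        exact absurd hwlt (not_lt.mpr (le_of_lt this))
    have hmap : ∀ x ∈ S, σ x ∈ S := by
      intro x hx
      rw [hmemS] at hx ⊢
      constructor
      · intro h
        exact hx.1 (σ.injective (h.trans hσk.symm))
      · intro h
        exact hx.2 (σ.injective (h.trans hσj.symm))
    have hfix := fix_of_mono σ S hmap hmono
    have hσ1 : σ = 1 := by
      apply Equiv.ext
      intro x
      by_cases h1 : x = ⟨k, by omega⟩
      · rw [h1]; exact hσk
      by_cases h2 : x = ⟨j, hj⟩
      · rw [h2]; exact hσj
      · exact hfix x ((hmemS x).mpr ⟨h1, h2⟩)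
    have : w = p := by
      have := hσ1
      rw [hσdef] at this
      exact (inv_mul_eq_one.mp this).symm
    exact this
  · intro h
    rw [h]
    exact hptau
end

section
/- Let n ≥ 2 and let k, i, j satisfy 1 ≤ k < i < j ≤ n. Then τ^{n,k}_{i,j} = s_{k+1} s_{k+2} ⋯ s_{j−1} ∘ s_k ∘ s_{k+1} s_{k+2} ⋯ s_{i−1} (the trailing product s_{k+1}⋯s_{i−1} being empty when i = k+1), where all products are composed right to left. -/
/-!
Each product `s_a ⋯ s_b` is the cycle `a ↦ a + 1 ↦ ⋯ ↦ b + 1 ↦ a`, so the permutation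
`g = (s_{k+1} ⋯ s_{j-1}) s_k (s_{k+1} ⋯ s_{i-1})` can be computed pointwise: it sends `i ↦ k`,
`j ↦ k + 1`, and any other `x` to `x`, `x + 2`, `x + 1` or `x` according as `x < k`, `k ≤ x < i`,
`i < x < j` or `j < x`; hence `g` is strictly monotone off `{i, j}`. For uniqueness, two
permutations of a well-order that agree on a set and are strictly monotone on its complement map
that complement onto the same set, and a strictly monotone map out of a well-order is determined
by its range.
-/

namespace Equiv.Perm

theorem eq_of_strictMonoOn_of_eqOn_compl {α : Type*} [LinearOrder α] [WellFoundedLT α]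
    {w w' : Perm α} {s : Set α} (hw : StrictMonoOn w s) (hw' : StrictMonoOn w' s)
    (h : Set.EqOn w w' sᶜ) : w = w' := by
  have himage : w '' s = w' '' s := by
    rw [← compl_inj_iff, ← w.image_compl, ← w'.image_compl, h.image_eq]
  have hrestrict : s.domRestrict w = s.domRestrict w' := by
    rw [← hw.domRestrict.range_inj hw'.domRestrict, Set.range_domRestrict,
      Set.range_domRestrict, himage]
  ext x
  by_cases hx : x ∈ s
  · exact congrFun hrestrict ⟨x, hx⟩
  · exact h hx

end Equiv.Perm

theorem sT_apply_val {n l : ℕ} (hl : l + 1 < n) (x : Fin n) :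
    (sT n l x : ℕ) = if (x : ℕ) = l then l + 1 else if (x : ℕ) = l + 1 then l else x := by
  rw [sT, dif_pos hl, Equiv.swap_apply_def]
  split_ifs <;> simp_all [Fin.ext_iff]

theorem ascProd_of_lt {n a b : ℕ} (h : b < a) : ascProd n a b = 1 := by
  simp [ascProd, show b + 1 - a = 0 by omega]

theorem ascProd_eq_sT_mul {n a b : ℕ} (h : a ≤ b) :
    ascProd n a b = sT n a * ascProd n (a + 1) b := by
  rw [ascProd, ascProd, show b + 1 - a = b + 1 - (a + 1) + 1 by omega, List.range'_succ]
  simp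

theorem ascProd_apply_val {n a b : ℕ} (hab : a ≤ b + 1) (hb : b + 1 < n) (x : Fin n) :
    (ascProd n a b x : ℕ) =
      if a ≤ (x : ℕ) ∧ (x : ℕ) ≤ b then (x : ℕ) + 1 else if (x : ℕ) = b + 1 then a else x := by
  induction hd : b + 1 - a generalizing a with
  | zero =>
    rw [ascProd_of_lt (by omega), Equiv.Perm.one_apply]
    split_ifs <;> omega
  | succ d ih =>
    rw [ascProd_eq_sT_mul (by omega), Equiv.Perm.mul_apply, sT_apply_val (by omega)]
    have := ih (a := a + 1) (by omega) (by omega)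
    split_ifs at this ⊢ <;> omega

theorem ascProd_mul_sT_mul_ascProd_apply_val {n k i j : ℕ} (hki : k < i) (hij : i < j)
    (hj : j < n) (x : Fin n) :
    ((ascProd n (k + 1) (j - 1) * sT n k * ascProd n (k + 1) (i - 1)) x : ℕ) =
      if (x : ℕ) = i then k
      else if (x : ℕ) = j then k + 1
      else if (x : ℕ) < k then x
      else if (x : ℕ) < i then (x : ℕ) + 2
      else if (x : ℕ) < j then (x : ℕ) + 1
      else x := by
  have hB := ascProd_apply_val (n := n) (a := k + 1) (b := i - 1) (by omega) (by omega) x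
  have hs := sT_apply_val (n := n) (l := k) (by omega) (ascProd n (k + 1) (i - 1) x)
  have hA := ascProd_apply_val (n := n) (a := k + 1) (b := j - 1) (by omega) (by omega)
    (sT n k (ascProd n (k + 1) (i - 1) x))
  rw [Equiv.Perm.mul_apply, Equiv.Perm.mul_apply, hA]
  split_ifs at hB hs ⊢ <;> omega

section IsTau

variable {n k : ℕ} {hk : k + 1 < n} {i j : Fin n} {w w' : Equiv.Perm (Fin n)}

theorem IsTau.strictMonoOn (hw : IsTau k hk i j w) : StrictMonoOn w {i, j}ᶜ := by
  intro s hs t ht hst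
  simp only [Set.mem_compl_iff, Set.mem_insert_iff, Set.mem_singleton_iff, not_or] at hs ht
  exact hw.2.2 s t hst hs.1 hs.2 ht.1 ht.2

theorem IsTau.eq_s6 (hw : IsTau k hk i j w) (hw' : IsTau k hk i j w') : w = w' := by
  refine Equiv.Perm.eq_of_strictMonoOn_of_eqOn_compl hw.strictMonoOn hw'.strictMonoOn ?_
  rw [compl_compl]
  rintro x (rfl | rfl)
  exacts [hw.1.trans hw'.1.symm, hw.2.1.trans hw'.2.1.symm]

end IsTau

theorem isTau_ascProd_mul_sT_mul_ascProd {n k : ℕ} {i j : Fin n} (hk : k + 1 < n)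
    (hki : k < i) (hij : i < j) :
    IsTau k hk i j (ascProd n (k + 1) (j - 1) * sT n k * ascProd n (k + 1) (i - 1)) := by
  have hg := ascProd_mul_sT_mul_ascProd_apply_val hki hij j.isLt
  refine ⟨Fin.ext ?_, Fin.ext ?_, fun s t hst hsi hsj hti htj => ?_⟩
  · rw [hg, if_pos rfl]
  · rw [hg, if_neg (Fin.val_ne_of_ne hij.ne'), if_pos rfl]
  · simp only [ne_eq, Fin.ext_iff] at hsi hsj hti htj
    rw [Fin.lt_def] at hst ⊢
    rw [hg, hg]
    split_ifs <;> omega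

/-- For `k < i < j ≤ n-1`:
`τ^{n,k}_{i,j} = (s_{k+1} ⋯ s_{j-1}) ∘ s_k ∘ (s_{k+1} ⋯ s_{i-1})`
(the trailing product being empty if `i = k+1`). -/
theorem stmt6 (n k i j : ℕ) (hki : k < i) (hij : i < j) (hj : j < n) :
    ∀ w : Equiv.Perm (Fin n),
      IsTau k (by omega) ⟨i, by omega⟩ ⟨j, hj⟩ w ↔
        w = ascProd n (k + 1) (j - 1) * sT n k * ascProd n (k + 1) (i - 1) := by
  intro w
  constructor
  · exact fun hw => hw.eq_s6 (isTau_ascProd_mul_sT_mul_ascProd _ hki hij)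
  · rintro rfl
    exact isTau_ascProd_mul_sT_mul_ascProd _ hki hij
end

section
/- Let n ≥ 1 and let λ : {1,…,n} → Bool be a word. Then there is exactly one cup diagram M that is oriented for λ, admissible for λ, and of degree 0 for λ. -/
/-- A cup diagram on `{0,…,n-1}`: a finite set `M` of pairs `(i,j)` with `i < j`,
with pairwise disjoint endpoints, non-crossing, and such that every position
strictly between the endpoints of a cup is itself an endpoint of some cup. -/
def IsCupDiagram {n : ℕ} (M : Finset (Fin n × Fin n)) : Prop :=
  (∀ p ∈ M, p.1 < p.2) ∧
  (∀ p ∈ M, ∀ q ∈ M, p ≠ q →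
    p.1 ≠ q.1 ∧ p.1 ≠ q.2 ∧ p.2 ≠ q.1 ∧ p.2 ≠ q.2) ∧
  (∀ p ∈ M, ∀ q ∈ M, ¬(p.1 < q.1 ∧ q.1 < p.2 ∧ p.2 < q.2)) ∧
  (∀ p ∈ M, ∀ l : Fin n, p.1 < l → l < p.2 → ∃ q ∈ M, l = q.1 ∨ l = q.2)

/-- A position is free if it is not an endpoint of any pair of `M`. -/
def IsFree {n : ℕ} (M : Finset (Fin n × Fin n)) (l : Fin n) : Prop :=
  ∀ p ∈ M, p.1 ≠ l ∧ p.2 ≠ l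

/-- `M` is oriented for the word `λ` if the two endpoints of each cup carry
different letters. -/
def OrientedFor {n : ℕ} (lam : Fin n → Bool) (M : Finset (Fin n × Fin n)) : Prop :=
  ∀ p ∈ M, lam p.1 ≠ lam p.2

/-- The degree of `M` for `λ`: the number of cups `(i,j)` with `λ(i) = true`
(clockwise cups). -/
def cupDegree {n : ℕ} (lam : Fin n → Bool) (M : Finset (Fin n × Fin n)) : ℕ :=
  (M.filter (fun p => lam p.1 = true)).card

/-- `M` is admissible for `λ` if there are no free positions `i < j` with
`λ(i) = false` (`∨`) and `λ(j) = true` (`∧`). -/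
def AdmissibleFor {n : ℕ} (lam : Fin n → Bool) (M : Finset (Fin n × Fin n)) : Prop :=
  ∀ i j : Fin n, i < j → IsFree M i → IsFree M j → ¬(lam i = false ∧ lam j = true)

section Aux


/-! Let `i < j` be an adjacent pair `∨∧` among the positions still to be matched. In an
admissible degree-zero diagram, `i` and `j` cannot both be free, a cup starting at `i` cannot
end beyond `j` (it would enclose `j`, whose cup would then cross it), and `j` cannot be closed by
a cup from further left (it would enclose `i`); so `(i, j)` is forced to be a cup. Removing it and
recursing, the diagram is built and determined by repeatedly matching adjacent `∨∧` pairs until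
the remaining positions read `∧ ⋯ ∧ ∨ ⋯ ∨`. -/

variable {n : ℕ}

theorem not_isFree_iff {M : Finset (Fin n × Fin n)} {l : Fin n} :
    ¬IsFree M l ↔ ∃ p ∈ M, p.1 = l ∨ p.2 = l := by
  simp only [IsFree, not_forall, not_and_or, not_ne_iff, exists_prop]

theorem IsFree.of_erase {M : Finset (Fin n × Fin n)} {i j l : Fin n}
    (h : IsFree (M.erase (i, j)) l) (hi : i ≠ l) (hj : j ≠ l) : IsFree M l := by
  intro p hp
  by_cases hpe : p = (i, j)
  · subst hpe
    exact ⟨hi, hj⟩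
  · exact h p (Finset.mem_erase.mpr ⟨hpe, hp⟩)

theorem IsFree.of_insert {M : Finset (Fin n × Fin n)} {p : Fin n × Fin n} {l : Fin n}
    (h : IsFree (insert p M) l) : IsFree M l :=
  fun q hq => h q (Finset.mem_insert_of_mem hq)

theorem exists_adjacent_false_true {lam : Fin n → Bool} {S : Finset (Fin n)}
    (h : ∃ i ∈ S, ∃ j ∈ S, i < j ∧ lam i = false ∧ lam j = true) :
    ∃ i ∈ S, ∃ j ∈ S, i < j ∧ lam i = false ∧ lam j = true ∧ ∀ l ∈ S, ¬(i < l ∧ l < j) := by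
  classical
  set T := (S ×ˢ S).filter fun p => p.1 < p.2 ∧ lam p.1 = false ∧ lam p.2 = true
  have hT : T.Nonempty := by
    obtain ⟨i, hi, j, hj, hij, hfi, htj⟩ := h
    exact ⟨(i, j), by simp [T, hi, hj, hij, hfi, htj]⟩
  -- a bad pair of minimal width has nothing of `S` in between
  obtain ⟨p, hp, hmin⟩ := T.exists_min_image (fun p => p.2.val - p.1.val) hT
  simp only [T, Finset.mem_filter, Finset.mem_product] at hp
  obtain ⟨⟨hp1, hp2⟩, hlt, hf, ht⟩ := hp
  refine ⟨p.1, hp1, p.2, hp2, hlt, hf, ht, fun l hl ⟨h1, h2⟩ => ?_⟩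
  have h1' : p.1.val < l.val := h1
  have h2' : l.val < p.2.val := h2
  cases hl' : lam l
  · have := hmin (l, p.2) (by simp [T, hl, hp2, h2, hl', ht])
    dsimp only at this
    omega
  · have := hmin (p.1, l) (by simp [T, hl, hp1, h1, hl', hf])
    dsimp only at this
    omega

/-- The conditions of the theorem relative to the set `S` of positions still to be matched;
orientation together with degree zero says that every cup reads `∨∧`. -/
structure IsDegreeZeroDiagramOn (lam : Fin n → Bool) (S : Finset (Fin n))
    (M : Finset (Fin n × Fin n)) : Prop where
  mem : ∀ p ∈ M, p.1 ∈ S ∧ p.2 ∈ S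
  lt : ∀ p ∈ M, p.1 < p.2
  disjoint : ∀ p ∈ M, ∀ q ∈ M, p ≠ q → p.1 ≠ q.1 ∧ p.1 ≠ q.2 ∧ p.2 ≠ q.1 ∧ p.2 ≠ q.2
  noncrossing : ∀ p ∈ M, ∀ q ∈ M, ¬(p.1 < q.1 ∧ q.1 < p.2 ∧ p.2 < q.2)
  nested : ∀ p ∈ M, ∀ l ∈ S, p.1 < l → l < p.2 → ¬IsFree M l
  orient : ∀ p ∈ M, lam p.1 = false ∧ lam p.2 = true
  admissible : ∀ i ∈ S, ∀ j ∈ S, i < j → IsFree M i → IsFree M j → ¬(lam i = false ∧ lam j = true)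

namespace IsDegreeZeroDiagramOn

variable {lam : Fin n → Bool} {S : Finset (Fin n)} {M : Finset (Fin n × Fin n)}

theorem exists_fst_eq (h : IsDegreeZeroDiagramOn lam S M) {l : Fin n} (hl : ¬IsFree M l)
    (hfl : lam l = false) : ∃ p ∈ M, p.1 = l := by
  obtain ⟨p, hp, h1 | rfl⟩ := not_isFree_iff.mp hl
  · exact ⟨p, hp, h1⟩
  · simp [(h.orient p hp).2] at hfl

theorem exists_snd_eq (h : IsDegreeZeroDiagramOn lam S M) {l : Fin n} (hl : ¬IsFree M l)
    (htl : lam l = true) : ∃ p ∈ M, p.2 = l := by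
  obtain ⟨p, hp, rfl | h2⟩ := not_isFree_iff.mp hl
  · simp [(h.orient p hp).1] at htl
  · exact ⟨p, hp, h2⟩

theorem le_snd_of_fst_eq (h : IsDegreeZeroDiagramOn lam S M) {i j : Fin n}
    (hadj : ∀ l ∈ S, ¬(i < l ∧ l < j)) {p : Fin n × Fin n} (hp : p ∈ M) (hpi : p.1 = i) :
    j ≤ p.2 :=
  le_of_not_gt fun hlt => hadj p.2 (h.mem p hp).2 ⟨hpi ▸ h.lt p hp, hlt⟩

theorem mem_of_adjacent (h : IsDegreeZeroDiagramOn lam S M) {i j : Fin n} (hi : i ∈ S)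
    (hj : j ∈ S) (hij : i < j) (hadj : ∀ l ∈ S, ¬(i < l ∧ l < j)) (hfi : lam i = false)
    (htj : lam j = true) : (i, j) ∈ M := by
  have hj_end : ¬IsFree M j := by
    intro hj_free
    have hi_end : ¬IsFree M i := fun hi_free =>
      h.admissible i hi j hj hij hi_free hj_free ⟨hfi, htj⟩
    obtain ⟨p, hp, hpi⟩ := h.exists_fst_eq hi_end hfi
    have hjp : j < p.2 := lt_of_le_of_ne (h.le_snd_of_fst_eq hadj hp hpi)
      fun e => (hj_free p hp).2 e.symm
    exact h.nested p hp j hj (hpi ▸ hij) hjp hj_free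
  obtain ⟨q, hq, rfl⟩ := h.exists_snd_eq hj_end htj
  suffices hqi : q.1 = i by simpa [← hqi] using hq
  rcases lt_trichotomy q.1 i with hlt | heq | hgt
  · obtain ⟨r, hr, hri⟩ := h.exists_fst_eq (h.nested q hq i hi hlt hij) hfi
    have hrq : r ≠ q := by rintro rfl; exact hlt.ne hri
    have hqr : q.2 < r.2 := lt_of_le_of_ne (h.le_snd_of_fst_eq hadj hr hri)
      (h.disjoint r hr q hq hrq).2.2.2.symm
    exact absurd ⟨hri ▸ hlt, hri ▸ hij, hqr⟩ (h.noncrossing q hq r hr)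
  · exact heq
  · exact absurd ⟨hgt, h.lt q hq⟩ (hadj q.1 (h.mem q hq).1)

theorem erase (h : IsDegreeZeroDiagramOn lam S M) {i j : Fin n} (hij : (i, j) ∈ M) :
    IsDegreeZeroDiagramOn lam ((S.erase i).erase j) (M.erase (i, j)) where
  mem p hp := by
    obtain ⟨hpij, hp⟩ := Finset.mem_erase.mp hp
    obtain ⟨h11, h12, h21, h22⟩ := h.disjoint p hp _ hij hpij
    simp only [Finset.mem_erase]
    exact ⟨⟨h12, h11, (h.mem p hp).1⟩, ⟨h22, h21, (h.mem p hp).2⟩⟩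
  lt p hp := h.lt p (Finset.mem_of_mem_erase hp)
  disjoint p hp q hq := h.disjoint p (Finset.mem_of_mem_erase hp) q (Finset.mem_of_mem_erase hq)
  noncrossing p hp q hq :=
    h.noncrossing p (Finset.mem_of_mem_erase hp) q (Finset.mem_of_mem_erase hq)
  nested p hp l hl h1 h2 hfree := by
    obtain ⟨hlj, hli, hl⟩ := by simpa only [Finset.mem_erase] using hl
    exact h.nested p (Finset.mem_of_mem_erase hp) l hl h1 h2
      (hfree.of_erase (Ne.symm hli) (Ne.symm hlj))
  orient p hp := h.orient p (Finset.mem_of_mem_erase hp)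
  admissible a ha b hb hab hfa hfb := by
    simp only [Finset.mem_erase] at ha hb
    exact h.admissible a ha.2.2 b hb.2.2 hab (hfa.of_erase (Ne.symm ha.2.1) (Ne.symm ha.1))
      (hfb.of_erase (Ne.symm hb.2.1) (Ne.symm hb.1))

theorem insert {i j : Fin n} (h : IsDegreeZeroDiagramOn lam ((S.erase i).erase j) M)
    (hi : i ∈ S) (hj : j ∈ S) (hij : i < j) (hadj : ∀ l ∈ S, ¬(i < l ∧ l < j))
    (hfi : lam i = false) (htj : lam j = true) :
    IsDegreeZeroDiagramOn lam S (insert (i, j) M) := by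
  have hM : ∀ p ∈ M, (p.1 ≠ j ∧ p.1 ≠ i ∧ p.1 ∈ S) ∧ (p.2 ≠ j ∧ p.2 ≠ i ∧ p.2 ∈ S) := by
    simpa only [Finset.mem_erase] using h.mem
  refine ⟨?_, ?_, ?_, ?_, ?_, ?_, ?_⟩
  · simp only [Finset.forall_mem_insert]
    exact ⟨⟨hi, hj⟩, fun p hp => ⟨(hM p hp).1.2.2, (hM p hp).2.2.2⟩⟩
  · simpa only [Finset.forall_mem_insert] using ⟨hij, h.lt⟩
  · simp only [Finset.forall_mem_insert]
    refine ⟨⟨fun h' => absurd rfl h', fun q hq _ => ?_⟩, fun p hp => ⟨fun _ => ?_, h.disjoint p hp⟩⟩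
    · exact ⟨(hM q hq).1.2.1.symm, (hM q hq).2.2.1.symm, (hM q hq).1.1.symm, (hM q hq).2.1.symm⟩
    · exact ⟨(hM p hp).1.2.1, (hM p hp).1.1, (hM p hp).2.2.1, (hM p hp).2.1⟩
  · simp only [Finset.forall_mem_insert]
    refine ⟨⟨fun h' => lt_irrefl _ h'.1, fun q hq h' => hadj q.1 (hM q hq).1.2.2 ⟨h'.1, h'.2.1⟩⟩,
      fun p hp => ⟨fun h' => hadj p.2 (hM p hp).2.2.2 ⟨h'.2.1, h'.2.2⟩, h.noncrossing p hp⟩⟩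
  · simp only [Finset.forall_mem_insert]
    refine ⟨fun l hl h1 h2 => absurd ⟨h1, h2⟩ (hadj l hl), fun p hp l hl h1 h2 hfree => ?_⟩
    have hij_free := hfree (i, j) (Finset.mem_insert_self _ _)
    exact h.nested p hp l (by simp [hl, hij_free.1.symm, hij_free.2.symm]) h1 h2 hfree.of_insert
  · simpa only [Finset.forall_mem_insert] using ⟨⟨hfi, htj⟩, h.orient⟩
  · intro a ha b hb hab hfa hfb
    have ha' := hfa (i, j) (Finset.mem_insert_self _ _)
    have hb' := hfb (i, j) (Finset.mem_insert_self _ _)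
    exact h.admissible a (by simp [ha, ha'.1.symm, ha'.2.symm]) b
      (by simp [hb, hb'.1.symm, hb'.2.symm]) hab hfa.of_insert hfb.of_insert

end IsDegreeZeroDiagramOn

theorem existsUnique_isDegreeZeroDiagramOn (lam : Fin n → Bool) (S : Finset (Fin n)) :
    ∃! M, IsDegreeZeroDiagramOn lam S M := by
  induction S using Finset.strongInduction with
  | H S ih =>
  by_cases hbad : ∃ i ∈ S, ∃ j ∈ S, i < j ∧ lam i = false ∧ lam j = true
  · obtain ⟨i, hi, j, hj, hij, hfi, htj, hadj⟩ := exists_adjacent_false_true hbad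
    have hS : (S.erase i).erase j ⊂ S :=
      (Finset.erase_subset j _).trans_ssubset (Finset.erase_ssubset hi)
    obtain ⟨M', hM', huniq⟩ := ih _ hS
    refine ⟨insert (i, j) M', hM'.insert hi hj hij hadj hfi htj, fun M hM => ?_⟩
    have hmem := hM.mem_of_adjacent hi hj hij hadj hfi htj
    rw [← Finset.insert_erase hmem, huniq _ (hM.erase hmem)]
  · refine ⟨∅, ⟨by simp, by simp, by simp, by simp, by simp, by simp,
      fun a ha b hb hab _ _ h => hbad ⟨a, ha, b, hb, hab, h⟩⟩, fun M hM => ?_⟩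
    refine Finset.eq_empty_iff_forall_notMem.mpr fun p hp => hbad ?_
    exact ⟨p.1, (hM.mem p hp).1, p.2, (hM.mem p hp).2, hM.lt p hp, hM.orient p hp⟩

theorem isDegreeZeroDiagramOn_univ_iff (lam : Fin n → Bool) (M : Finset (Fin n × Fin n)) :
    IsDegreeZeroDiagramOn lam Finset.univ M ↔
      IsCupDiagram M ∧ OrientedFor lam M ∧ AdmissibleFor lam M ∧ cupDegree lam M = 0 := by
  have hdeg : cupDegree lam M = 0 ↔ ∀ p ∈ M, lam p.1 = false := by
    simp [cupDegree, Finset.filter_eq_empty_iff]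
  have hnested : ∀ l, ¬IsFree M l ↔ ∃ q ∈ M, l = q.1 ∨ l = q.2 := by
    simp [not_isFree_iff, eq_comm]
  constructor
  · intro h
    refine ⟨⟨h.lt, h.disjoint, h.noncrossing, fun p hp l h1 h2 => ?_⟩, ?_, ?_, ?_⟩
    · exact (hnested l).mp (h.nested p hp l (Finset.mem_univ l) h1 h2)
    · intro p hp
      simp [(h.orient p hp).1, (h.orient p hp).2]
    · exact fun a b => h.admissible a (Finset.mem_univ a) b (Finset.mem_univ b)
    · exact hdeg.mpr fun p hp => (h.orient p hp).1
  · rintro ⟨⟨hlt, hdisj, hcross, hint⟩, hor, hadm, hd⟩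
    refine ⟨fun _ _ => ⟨Finset.mem_univ _, Finset.mem_univ _⟩, hlt, hdisj, hcross,
      fun p hp l _ h1 h2 => (hnested l).mpr (hint p hp l h1 h2), fun p hp => ?_,
      fun a _ b _ => hadm a b⟩
    have hf := hdeg.mp hd p hp
    have ho := hor p hp
    rw [hf] at ho
    exact ⟨hf, by simpa using ho.symm⟩

theorem stmt13_general (n : ℕ) (lam : Fin n → Bool) :
    ∃! M : Finset (Fin n × Fin n),
      IsCupDiagram M ∧ OrientedFor lam M ∧ AdmissibleFor lam M ∧ cupDegree lam M = 0 := by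
  simpa only [isDegreeZeroDiagramOn_univ_iff] using
    existsUnique_isDegreeZeroDiagramOn lam Finset.univ

/-- For every word `λ` there is exactly one cup diagram oriented for `λ`,
admissible for `λ`, and of degree `0` for `λ`. -/
theorem stmt13 (n : ℕ) (hn : 1 ≤ n) (lam : Fin n → Bool) :
    ∃! M : Finset (Fin n × Fin n),
      IsCupDiagram M ∧ OrientedFor lam M ∧ AdmissibleFor lam M ∧ cupDegree lam M = 0 :=
  stmt13_general n lam
end Aux
end

section
/- Let n ≥ 2, 1 ≤ k ≤ n−1, and let M be a cup diagram on {1,…,n} with |M| ≤ min(k, n−k). Then there is exactly one word λ : {1,…,n} → Bool taking the value true at exactly k positions such that M is oriented for λ, admissible for λ, and of degree 0 for λ. -/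
section InitialSegment

variable {α : Type*} [LinearOrder α]

def IsInitialIn (S F : Finset α) : Prop :=
  S ⊆ F ∧ ∀ i ∈ F, ∀ j ∈ S, i < j → i ∈ S

theorem exists_isInitialIn_card_eq (F : Finset α) {t : ℕ} (ht : t ≤ F.card) :
    ∃ S, IsInitialIn S F ∧ S.card = t := by
  induction t with
  | zero => exact ⟨∅, ⟨Finset.empty_subset F, by simp⟩, rfl⟩
  | succ t ih =>
    obtain ⟨S, ⟨hSF, hS⟩, rfl⟩ := ih (Nat.le_of_succ_le ht)
    have hne : (F \ S).Nonempty := by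
      rw [Finset.sdiff_nonempty]
      intro h
      exact absurd (Finset.card_le_card h) (by omega)
    set x := (F \ S).min' hne
    obtain ⟨hxF, hxS⟩ := Finset.mem_sdiff.1 ((F \ S).min'_mem hne)
    refine ⟨insert x S, ⟨Finset.insert_subset hxF hSF, ?_⟩, Finset.card_insert_of_notMem hxS⟩
    intro i hi j hj hij
    rw [Finset.mem_insert] at hj ⊢
    rcases hj with rfl | hj
    · by_contra! hiS
      exact (Finset.min'_le _ i (Finset.mem_sdiff.2 ⟨hi, hiS.2⟩)).not_gt hij
    · exact Or.inr (hS i hi j hj hij)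

theorem IsInitialIn.eq_of_card_eq {S S' F : Finset α} (hS : IsInitialIn S F)
    (hS' : IsInitialIn S' F) (hcard : S.card = S'.card) : S = S' := by
  by_contra hne
  obtain ⟨x, hxS, hxS'⟩ := Finset.not_subset.1 fun h =>
    hne (Finset.eq_of_subset_of_card_le h hcard.ge)
  obtain ⟨y, hyS', hyS⟩ := Finset.not_subset.1 fun h =>
    hne (Finset.eq_of_subset_of_card_le h hcard.le).symm
  rcases lt_trichotomy x y with h | rfl | h
  · exact hxS' (hS'.2 x (hS.1 hxS) y hyS' h)
  · exact hyS hxS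
  · exact hyS (hS.2 y (hS'.1 hyS') x hxS h)

end InitialSegment

section CupDiagram

variable {n : ℕ} {M : Finset (Fin n × Fin n)}

def freePositions (M : Finset (Fin n × Fin n)) : Finset (Fin n) :=
  Finset.univ \ (M.image Prod.fst ∪ M.image Prod.snd)

theorem mem_freePositions {i : Fin n} : i ∈ freePositions M ↔ IsFree M i := by
  simp only [freePositions, IsFree, Finset.mem_sdiff, Finset.mem_univ, true_and,
    Finset.mem_union, Finset.mem_image, not_or, not_exists, not_and]
  exact ⟨fun h p hp => ⟨h.1 p hp, h.2 p hp⟩,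
    fun h => ⟨fun p hp => (h p hp).1, fun p hp => (h p hp).2⟩⟩

theorem fst_notMem_freePositions {p : Fin n × Fin n} (hp : p ∈ M) : p.1 ∉ freePositions M :=
  fun h => (mem_freePositions.1 h p hp).1 rfl

theorem snd_notMem_freePositions {p : Fin n × Fin n} (hp : p ∈ M) : p.2 ∉ freePositions M :=
  fun h => (mem_freePositions.1 h p hp).2 rfl

theorem mem_freePositions_or_endpoint (i : Fin n) :
    i ∈ freePositions M ∨ ∃ p ∈ M, i = p.1 ∨ i = p.2 := by
  by_contra! h
  exact h.1 (mem_freePositions.2 fun p hp => ⟨(h.2 p hp).1.symm, (h.2 p hp).2.symm⟩)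

theorem IsCupDiagram.card_image_snd (hM : IsCupDiagram M) : (M.image Prod.snd).card = M.card :=
  Finset.card_image_of_injOn fun p hp q hq hpq => by
    by_contra h
    exact (hM.2.1 p hp q hq h).2.2.2 hpq

theorem IsCupDiagram.disjoint_image_fst_snd (hM : IsCupDiagram M) :
    Disjoint (M.image Prod.fst) (M.image Prod.snd) := by
  simp only [Finset.disjoint_left, Finset.mem_image]
  rintro _ ⟨p, hp, rfl⟩ ⟨q, hq, hqp⟩
  by_cases h : p = q
  · subst h
    exact (hM.1 p hp).ne hqp.symm
  · exact (hM.2.1 p hp q hq h).2.1 hqp.symm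

theorem IsCupDiagram.card_freePositions (hM : IsCupDiagram M) :
    (freePositions M).card + 2 * M.card = n := by
  have hfst : (M.image Prod.fst).card = M.card :=
    Finset.card_image_of_injOn fun p hp q hq hpq => by
      by_contra h
      exact (hM.2.1 p hp q hq h).1 hpq
  have hends : (M.image Prod.fst ∪ M.image Prod.snd).card = 2 * M.card := by
    rw [Finset.card_union_of_disjoint hM.disjoint_image_fst_snd, hfst, hM.card_image_snd]
    ring
  have hle := Finset.card_le_univ (M.image Prod.fst ∪ M.image Prod.snd)
  rw [hends, Fintype.card_fin] at hle
  rw [freePositions, Finset.card_sdiff_of_subset (Finset.subset_univ _), hends,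
    Finset.card_univ, Fintype.card_fin]
  omega

def CupsAnticlockwise (lam : Fin n → Bool) (M : Finset (Fin n × Fin n)) : Prop :=
  ∀ p ∈ M, lam p.1 = false ∧ lam p.2 = true

theorem orientedFor_and_cupDegree_eq_zero_iff {lam : Fin n → Bool} :
    OrientedFor lam M ∧ cupDegree lam M = 0 ↔ CupsAnticlockwise lam M := by
  simp only [OrientedFor, cupDegree, Finset.card_eq_zero, Finset.filter_eq_empty_iff,
    CupsAnticlockwise]
  constructor
  · rintro ⟨hor, hdeg⟩ p hp
    have h1 : lam p.1 = false := by simpa using hdeg hp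
    exact ⟨h1, by simpa [h1] using (hor p hp).symm⟩
  · intro h
    exact ⟨fun p hp => by simp [(h p hp).1, (h p hp).2], fun p hp => by simp [(h p hp).1]⟩

theorem admissibleFor_iff_isInitialIn {lam : Fin n → Bool} :
    AdmissibleFor lam M ↔
      IsInitialIn ((freePositions M).filter (lam · = true)) (freePositions M) := by
  simp only [AdmissibleFor, IsInitialIn, Finset.filter_subset, true_and, Finset.mem_filter,
    ← mem_freePositions, Bool.not_eq_true, not_and]
  constructor
  · intro h i hi j ⟨hj, hjt⟩ hij
    exact ⟨hi, by simpa [hjt] using mt (h i j hij hi hj)⟩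
  · intro h i j hij hi hj hif
    simpa [hif] using mt (h i hi j ⟨hj, ·⟩ hij)

theorem CupsAnticlockwise.card_filter_true (hM : IsCupDiagram M) {lam : Fin n → Bool}
    (h : CupsAnticlockwise lam M) :
    (Finset.univ.filter (lam · = true)).card =
      M.card + ((freePositions M).filter (lam · = true)).card := by
  have hsplit : Finset.univ.filter (lam · = true) =
      M.image Prod.snd ∪ (freePositions M).filter (lam · = true) := by
    ext i
    simp only [Finset.mem_filter, Finset.mem_univ, true_and, Finset.mem_union, Finset.mem_image]
    rcases mem_freePositions_or_endpoint (M := M) i with hi | ⟨p, hp, rfl | rfl⟩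
    · simp only [hi, true_and, iff_or_self]
      rintro ⟨p, hp, rfl⟩
      exact absurd hi (snd_notMem_freePositions hp)
    · simp only [(h p hp).1, Bool.false_eq_true, false_iff, not_or, not_exists, not_and]
      exact ⟨fun q hq hqp => Finset.disjoint_left.1 hM.disjoint_image_fst_snd
        (Finset.mem_image_of_mem _ hp) (hqp ▸ Finset.mem_image_of_mem _ hq), by simp⟩
    · simp only [(h p hp).2, true_iff]
      exact Or.inl ⟨p, hp, rfl⟩
  rw [hsplit, Finset.card_union_of_disjoint, hM.card_image_snd]
  rw [Finset.disjoint_left]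
  rintro _ hi hF
  obtain ⟨p, hp, rfl⟩ := Finset.mem_image.1 hi
  exact snd_notMem_freePositions hp (Finset.mem_of_mem_filter _ hF)

theorem CupsAnticlockwise.eq_of_filter_freePositions_eq {lam lam' : Fin n → Bool}
    (h : CupsAnticlockwise lam M) (h' : CupsAnticlockwise lam' M)
    (hfree : (freePositions M).filter (lam · = true) =
      (freePositions M).filter (lam' · = true)) :
    lam = lam' := by
  funext i
  rcases mem_freePositions_or_endpoint (M := M) i with hi | ⟨p, hp, rfl | rfl⟩
  · have := congrArg (i ∈ ·) hfree
    simp only [Finset.mem_filter, hi, true_and, eq_iff_iff] at this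
    exact Bool.eq_iff_iff.2 this
  · rw [(h p hp).1, (h' p hp).1]
  · rw [(h p hp).2, (h' p hp).2]

theorem IsCupDiagram.exists_cupsAnticlockwise_filter_eq (hM : IsCupDiagram M)
    {S : Finset (Fin n)} (hS : S ⊆ freePositions M) :
    ∃ lam, CupsAnticlockwise lam M ∧ (freePositions M).filter (lam · = true) = S := by
  refine ⟨fun i => decide (i ∈ M.image Prod.snd ∪ S), fun p hp => ⟨?_, ?_⟩, ?_⟩
  · simp only [Finset.mem_union, decide_eq_false_iff_not, not_or]
    exact ⟨Finset.disjoint_left.1 hM.disjoint_image_fst_snd (Finset.mem_image_of_mem _ hp),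
      fun hpS => fst_notMem_freePositions hp (hS hpS)⟩
  · simp [Finset.mem_image_of_mem _ hp]
  · ext i
    simp only [Finset.mem_filter, Finset.mem_union, decide_eq_true_eq]
    refine ⟨fun ⟨hi, hiS⟩ => hiS.resolve_left ?_, fun hiS => ⟨hS hiS, Or.inr hiS⟩⟩
    rintro hi'
    obtain ⟨p, hp, rfl⟩ := Finset.mem_image.1 hi'
    exact snd_notMem_freePositions hp hi

end CupDiagram

theorem stmt14_general (n k : ℕ) (hk2 : k ≤ n - 1)
    (M : Finset (Fin n × Fin n)) (hM : IsCupDiagram M) (hcard : M.card ≤ min k (n - k)) :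
    ∃! lam : Fin n → Bool,
      (Finset.univ.filter (fun i => lam i = true)).card = k ∧
      OrientedFor lam M ∧ AdmissibleFor lam M ∧ cupDegree lam M = 0 := by
  have hfree := hM.card_freePositions
  have hm := le_min_iff.1 hcard
  obtain ⟨S, hS, hScard⟩ :=
    exists_isInitialIn_card_eq (freePositions M) (t := k - M.card) (by omega)
  obtain ⟨lam, hcups, hfilter⟩ := hM.exists_cupsAnticlockwise_filter_eq hS.1
  obtain ⟨hor, hdeg⟩ := orientedFor_and_cupDegree_eq_zero_iff.2 hcups
  refine ⟨lam, ⟨?_, hor, admissibleFor_iff_isInitialIn.2 (hfilter ▸ hS), hdeg⟩, ?_⟩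
  · rw [hcups.card_filter_true hM, hfilter, hScard]
    omega
  · rintro lam' ⟨hk', hor', hadm', hdeg'⟩
    have hcups' := orientedFor_and_cupDegree_eq_zero_iff.1 ⟨hor', hdeg'⟩
    rw [hcups'.card_filter_true hM] at hk'
    refine hcups'.eq_of_filter_freePositions_eq hcups ?_
    rw [hfilter]
    exact (admissibleFor_iff_isInitialIn.1 hadm').eq_of_card_eq hS (by omega)

/-- For every cup diagram `M` with at most `min(k, n-k)` cups there is exactly one
word `λ` with exactly `k` letters `∧` (`true`) such that `M` is oriented for `λ`,
admissible for `λ`, and of degree `0` for `λ`. -/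
theorem stmt14 (n k : ℕ) (hn : 2 ≤ n) (hk1 : 1 ≤ k) (hk2 : k ≤ n - 1)
    (M : Finset (Fin n × Fin n)) (hM : IsCupDiagram M) (hcard : M.card ≤ min k (n - k)) :
    ∃! lam : Fin n → Bool,
      (Finset.univ.filter (fun i => lam i = true)).card = k ∧
      OrientedFor lam M ∧ AdmissibleFor lam M ∧ cupDegree lam M = 0 :=
  stmt14_general n k hk2 M hM hcard
end

section
/- Let n ≥ 2, 1 ≤ k ≤ n−1, and let λ : {1,…,n} → Bool be a word taking the value true at exactly k positions. Then there exists a cup diagram M that is oriented for λ and admissible for λ with |M| = min(k, n−k). -/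
open Finset

lemma Fin.exists_castSucc_ne_succ {α : Type*} {m : ℕ} {f : Fin (m + 1) → α}
    (h : ∃ i j, f i ≠ f j) : ∃ p : Fin m, f p.castSucc ≠ f p.succ := by
  by_contra! hf
  have hconst : ∀ i, f i = f 0 := by
    intro i
    induction i using Fin.induction with
    | zero => rfl
    | succ p ih => exact (hf p).symm.trans ih
  obtain ⟨i, j, hij⟩ := h
  exact hij ((hconst i).trans (hconst j).symm)

lemma Fin.not_castSucc_lt_and_lt_succ {n : ℕ} (p : Fin n) (l : Fin (n + 1)) :
    ¬(p.castSucc < l ∧ l < p.succ) :=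
  fun ⟨h1, h2⟩ => (Fin.castSucc_lt_iff_succ_le.1 h1).not_gt h2

section SkipPair

variable {m : ℕ} (p : Fin (m + 1))

def skipPair : Fin m ↪o Fin (m + 2) :=
  p.succAboveOrderEmb.trans p.castSucc.succAboveOrderEmb

lemma skipPair_apply (x : Fin m) : skipPair p x = p.castSucc.succAbove (p.succAbove x) := rfl

lemma range_skipPair : Set.range (skipPair p) = {p.castSucc, p.succ}ᶜ := by
  ext l
  simp only [skipPair_apply, Set.mem_range, Set.mem_compl_iff, Set.mem_insert_iff,
    Set.mem_singleton_iff, not_or, ← Fin.succAbove_castSucc_self p]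
  constructor
  · rintro ⟨x, rfl⟩
    exact ⟨Fin.succAbove_ne _ _, Fin.succAbove_right_inj.not.2 (Fin.succAbove_ne _ _)⟩
  · rintro ⟨hc, hs⟩
    obtain ⟨y, rfl⟩ := Fin.exists_succAbove_eq hc
    obtain ⟨x, rfl⟩ := Fin.exists_succAbove_eq (Fin.succAbove_right_inj.not.1 hs)
    exact ⟨x, rfl⟩

lemma skipPair_ne_castSucc (x : Fin m) : skipPair p x ≠ p.castSucc := by
  have := range_skipPair p ▸ Set.mem_range_self x
  simp_all

lemma skipPair_ne_succ (x : Fin m) : skipPair p x ≠ p.succ := by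
  have := range_skipPair p ▸ Set.mem_range_self x
  simp_all

lemma card_filter_skipPair_add_one {lam : Fin (m + 2) → Bool}
    (hp : lam p.castSucc ≠ lam p.succ) :
    (univ.filter fun x => lam (skipPair p x) = true).card + 1
      = (univ.filter fun i => lam i = true).card := by
  have hpair :
      ((if lam p.castSucc = true then 1 else 0) + if lam p.succ = true then 1 else 0) = 1 := by
    revert hp
    cases lam p.castSucc <;> cases lam p.succ <;> decide
  rw [card_filter, card_filter, Fin.sum_univ_succAbove _ p.castSucc,
    Fin.sum_univ_succAbove _ p, Fin.succAbove_castSucc_self, ← add_assoc, hpair, add_comm]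
  rfl

end SkipPair

section ExtendCups

variable {m : ℕ} (p : Fin (m + 1))

def extendCups (M : Finset (Fin m × Fin m)) : Finset (Fin (m + 2) × Fin (m + 2)) :=
  insert (p.castSucc, p.succ)
    (M.map ((skipPair p).toEmbedding.prodMap (skipPair p).toEmbedding))

variable {p} {M : Finset (Fin m × Fin m)}

lemma mem_extendCups {q : Fin (m + 2) × Fin (m + 2)} :
    q ∈ extendCups p M ↔
      q = (p.castSucc, p.succ) ∨ ∃ r ∈ M, (skipPair p r.1, skipPair p r.2) = q := by
  simp [extendCups]

lemma card_extendCups : (extendCups p M).card = M.card + 1 := by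
  rw [extendCups, card_insert_of_notMem (by simp [skipPair_ne_castSucc]), card_map]

lemma IsCupDiagram.extendCups (hM : IsCupDiagram M) : IsCupDiagram (extendCups p M) := by
  obtain ⟨hlt, hdisj, hcross, hnest⟩ := hM
  have e_lt {x y : Fin m} : skipPair p x < skipPair p y ↔ x < y := (skipPair p).lt_iff_lt
  have e_inj {x y : Fin m} : skipPair p x ≠ skipPair p y ↔ x ≠ y :=
    (skipPair p).injective.ne_iff
  refine ⟨?_, ?_, ?_, ?_⟩ <;> simp only [mem_extendCups]
  · rintro _ (rfl | ⟨r, hr, rfl⟩)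
    exacts [Fin.castSucc_lt_succ, e_lt.2 (hlt r hr)]
  · rintro _ (rfl | ⟨r, hr, rfl⟩) _ (rfl | ⟨s, hs, rfl⟩) hne
    · exact absurd rfl hne
    · simp [(skipPair_ne_castSucc _ _).symm, (skipPair_ne_succ _ _).symm]
    · simp [skipPair_ne_castSucc, skipPair_ne_succ]
    · simpa only [e_inj] using hdisj r hr s hs (by rintro rfl; exact hne rfl)
  · rintro _ (rfl | ⟨r, hr, rfl⟩) _ (rfl | ⟨s, hs, rfl⟩)
    · exact fun h => h.1.false
    · exact fun h => Fin.not_castSucc_lt_and_lt_succ p _ ⟨h.1, h.2.1⟩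
    · exact fun h => Fin.not_castSucc_lt_and_lt_succ p _ ⟨h.2.1, h.2.2⟩
    · simpa only [e_lt] using hcross r hr s hs
  · rintro _ (rfl | ⟨r, hr, rfl⟩) l hl₁ hl₂
    · exact (Fin.not_castSucc_lt_and_lt_succ p l ⟨hl₁, hl₂⟩).elim
    by_cases hl : l ∈ Set.range (skipPair p)
    · obtain ⟨x, rfl⟩ := hl
      obtain ⟨s, hs, hxs⟩ := hnest r hr x (e_lt.1 hl₁) (e_lt.1 hl₂)
      exact ⟨_, Or.inr ⟨s, hs, rfl⟩, by simpa only [(skipPair p).injective.eq_iff] using hxs⟩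
    · rw [range_skipPair] at hl
      exact ⟨_, Or.inl rfl, by simpa [or_iff_not_imp_left] using hl⟩

lemma orientedFor_extendCups {lam : Fin (m + 2) → Bool}
    (hM : OrientedFor (lam ∘ skipPair p) M) (hp : lam p.castSucc ≠ lam p.succ) :
    OrientedFor lam (extendCups p M) := by
  intro q hq
  rcases mem_extendCups.1 hq with rfl | ⟨r, hr, rfl⟩
  exacts [hp, hM r hr]

lemma IsFree.of_extendCups {x : Fin m} (h : IsFree (extendCups p M) (skipPair p x)) :
    IsFree M x := fun r hr => by
  simpa only [(skipPair p).injective.ne_iff] using h _ (mem_extendCups.2 (Or.inr ⟨r, hr, rfl⟩))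

lemma IsFree.mem_range_skipPair {l : Fin (m + 2)} (h : IsFree (extendCups p M) l) :
    l ∈ Set.range (skipPair p) := by
  have := h _ (mem_extendCups.2 (Or.inl rfl))
  rw [range_skipPair]
  simp_all [eq_comm]

lemma admissibleFor_extendCups {lam : Fin (m + 2) → Bool}
    (hM : AdmissibleFor (lam ∘ skipPair p) M) : AdmissibleFor lam (extendCups p M) := by
  intro i j hij hi hj
  obtain ⟨x, rfl⟩ := hi.mem_range_skipPair
  obtain ⟨y, rfl⟩ := hj.mem_range_skipPair
  exact hM x y ((skipPair p).lt_iff_lt.1 hij) hi.of_extendCups hj.of_extendCups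

end ExtendCups

lemma exists_cupDiagram_of_forall_eq {n k : ℕ} {lam : Fin n → Bool}
    (hk : (univ.filter fun i => lam i = true).card = k) (hlam : ∀ i j, lam i = lam j) :
    ∃ M : Finset (Fin n × Fin n),
      IsCupDiagram M ∧ OrientedFor lam M ∧ AdmissibleFor lam M ∧ M.card = min k (n - k) := by
  refine ⟨∅, by simp [IsCupDiagram], by simp [OrientedFor], ?_, ?_⟩
  · rintro i j - - - ⟨hi, hj⟩
    simp_all [hlam i j]
  · by_cases htrue : ∃ i, lam i = true
    · obtain ⟨i, hi⟩ := htrue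
      have : univ.filter (fun j => lam j = true) = univ :=
        filter_true_of_mem fun j _ => hlam i j ▸ hi
      simp [← hk, this]
    · push Not at htrue
      simp [← hk, htrue]

theorem stmt15_general (n k : ℕ) (lam : Fin n → Bool)
    (hlam : (Finset.univ.filter (fun i => lam i = true)).card = k) :
    ∃ M : Finset (Fin n × Fin n),
      IsCupDiagram M ∧ OrientedFor lam M ∧ AdmissibleFor lam M ∧
      M.card = min k (n - k) := by
  induction n using Nat.strong_induction_on generalizing k with
  | _ n ih =>
  by_cases hconst : ∀ i j, lam i = lam j
  · exact exists_cupDiagram_of_forall_eq hlam hconst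
  push Not at hconst
  obtain ⟨i, j, hij⟩ := hconst
  obtain ⟨m, rfl⟩ : ∃ m, n = m + 2 :=
    ⟨n - 2, by have := Fin.val_ne_of_ne (ne_of_apply_ne lam hij); omega⟩
  obtain ⟨p, hp⟩ := Fin.exists_castSucc_ne_succ ⟨i, j, hij⟩
  obtain ⟨M, hM, hor, hadm, hcard⟩ := ih m (by omega) _ (fun x => lam (skipPair p x)) rfl
  refine ⟨extendCups p M, hM.extendCups, orientedFor_extendCups hor hp,
    admissibleFor_extendCups hadm, ?_⟩
  have hcount := card_filter_skipPair_add_one p hp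
  have hle := card_le_univ (univ.filter fun x => lam (skipPair p x) = true)
  rw [Fintype.card_fin] at hle
  rw [card_extendCups, hcard]
  omega

/-- For every word `λ` with exactly `k` letters `∧` (`true`) there exists a cup
diagram `M` oriented and admissible for `λ` with exactly `min(k, n-k)` cups. -/
theorem stmt15 (n k : ℕ) (hn : 2 ≤ n) (hk1 : 1 ≤ k) (hk2 : k ≤ n - 1)
    (lam : Fin n → Bool)
    (hlam : (Finset.univ.filter (fun i => lam i = true)).card = k) :
    ∃ M : Finset (Fin n × Fin n),
      IsCupDiagram M ∧ OrientedFor lam M ∧ AdmissibleFor lam M ∧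
      M.card = min k (n - k) :=
  stmt15_general n k lam hlam
end

section
/- Let μ and ν be compositions of n (finite lists of positive integers summing to n) having the same underlying partition, i.e. the multisets of parts of μ and of ν coincide. Then there exists a permutation w of {1,…,n} such that for every block X_i of μ there is a block Y_j of ν with |X_i| = |Y_j| and w maps X_i onto Y_j preserving the natural order of the elements; and for every such w one has w·G_μ = G_ν·w as subsets of S_n. -/
/-- `InBlock μ i x` says that the (0-indexed) position `x` lies in the `i`-th block
of the composition `μ`, i.e. `μ₀ + ⋯ + μ_{i-1} ≤ x < μ₀ + ⋯ + μ_i`. -/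
def InBlock (μ : List ℕ) (i : ℕ) (x : ℕ) : Prop :=
  (μ.take i).sum ≤ x ∧ x < (μ.take (i + 1)).sum

/-- `BlockOrderMap n μ ν w` says that for every block `X_i` of `μ` there is a block
`Y_j` of `ν` of the same size such that `w` maps `X_i` into `Y_j` preserving the
natural order of the elements (hence onto `Y_j`, the sizes being equal).
For `μ = ν` this is the defining property of the group `G_μ`. -/
def BlockOrderMap (n : ℕ) (μ ν : List ℕ) (w : Equiv.Perm (Fin n)) : Prop :=
  ∀ i : ℕ, i < μ.length → ∃ j : ℕ, j < ν.length ∧ ν.getD j 0 = μ.getD i 0 ∧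
    (∀ x : Fin n, InBlock μ i x.val → InBlock ν j (w x).val) ∧
    (∀ x y : Fin n, InBlock μ i x.val → InBlock μ i y.val → x < y → w x < w y)

/-! Positive compositions are Mathlib's `Composition`s, whose blocks are the ranges of the order
embeddings `c.embedding i`. A permutation `w` mapping each block of `μ` increasingly into a block
of `ν` of the same size maps it onto that block by counting, so `w⁻¹` is such a map from `ν` to
`μ`. These maps compose, hence `g ↦ w g w⁻¹` carries `G_μ` onto `G_ν`, which is
`w G_μ = G_ν w`. One such `w` is obtained by matching the equal parts of `μ` and `ν` and
transporting through `Composition.blocksFinEquiv`. -/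

theorem BlockOrderMap.mul {n : ℕ} {μ ν ρ : List ℕ} {w v : Equiv.Perm (Fin n)}
    (hw : BlockOrderMap n μ ν w) (hv : BlockOrderMap n ν ρ v) :
    BlockOrderMap n μ ρ (v * w) := by
  intro i hi
  obtain ⟨j, hj, hsize, hmaps, hmono⟩ := hw i hi
  obtain ⟨k, hk, hsize', hmaps', hmono'⟩ := hv j hj
  exact ⟨k, hk, hsize'.trans hsize, fun x hx => hmaps' _ (hmaps x hx),
    fun x y hx hy hxy => hmono' _ _ (hmaps x hx) (hmaps y hy) (hmono x y hx hy hxy)⟩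

theorem Set.image_mul_left_eq_image_mul_right {G : Type*} [Group G] {A B : Set G} {w : G}
    (hAB : ∀ g ∈ A, w * g * w⁻¹ ∈ B) (hBA : ∀ g ∈ B, w⁻¹ * g * w ∈ A) :
    (w * ·) '' A = (· * w) '' B := by
  ext h
  constructor
  · rintro ⟨g, hg, rfl⟩
    exact ⟨w * g * w⁻¹, hAB g hg, by group⟩
  · rintro ⟨g, hg, rfl⟩
    exact ⟨w⁻¹ * g * w, hBA g hg, by group⟩

namespace Composition

open Set

variable {n : ℕ} (c d : Composition n)

def MapsBlocksMonotone (w : Equiv.Perm (Fin n)) : Prop :=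
  ∀ i : Fin c.length, ∃ j : Fin d.length, d.blocksFun j = c.blocksFun i ∧
    MapsTo w (range (c.embedding i)) (range (d.embedding j)) ∧
    StrictMonoOn w (range (c.embedding i))

theorem inBlock_iff_mem_range_embedding {i : ℕ} (hi : i < c.length) (x : Fin n) :
    InBlock c.blocks i x ↔ x ∈ range (c.embedding ⟨i, hi⟩) :=
  (c.mem_range_embedding_iff (i := ⟨i, hi⟩)).symm

theorem blockOrderMap_iff (w : Equiv.Perm (Fin n)) :
    BlockOrderMap n c.blocks d.blocks w ↔ c.MapsBlocksMonotone d w := by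
  unfold BlockOrderMap MapsBlocksMonotone
  refine ⟨fun hw i => ?_, fun hw i hi => ?_⟩
  · obtain ⟨j, hj, hsize, hmaps, hmono⟩ := hw i i.2
    simp only [c.inBlock_iff_mem_range_embedding i.2, d.inBlock_iff_mem_range_embedding hj,
      List.getD_eq_getElem _ _ hj, List.getD_eq_getElem _ _ i.2] at hsize hmaps hmono
    exact ⟨⟨j, hj⟩, hsize, hmaps, fun x hx y hy => hmono x y hx hy⟩
  · obtain ⟨⟨j, hj⟩, hsize, hmaps, hmono⟩ := hw ⟨i, hi⟩
    refine ⟨j, hj, ?_⟩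
    simp only [c.inBlock_iff_mem_range_embedding hi, d.inBlock_iff_mem_range_embedding hj,
      List.getD_eq_getElem _ _ hj, List.getD_eq_getElem _ _ hi]
    exact ⟨hsize, hmaps, fun x y hx hy => hmono hx hy⟩

variable {c d} in
theorem MapsBlocksMonotone.inv {w : Equiv.Perm (Fin n)} (hw : c.MapsBlocksMonotone d w) :
    d.MapsBlocksMonotone c w⁻¹ := by
  intro j
  -- the block of the preimage of the first element of block `j` is mapped onto block `j`
  set x₀ := w⁻¹ (d.embedding j ⟨0, d.one_le_blocksFun j⟩)
  obtain ⟨j', hsize, hmaps, hmono⟩ := hw (c.index x₀)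
  obtain rfl : j' = j := by
    simpa [x₀] using d.mem_range_embedding_iff'.1 (hmaps (c.mem_range_embedding x₀))
  set i := c.index x₀
  have himage : w '' range (c.embedding i) = range (d.embedding j') := by
    refine eq_of_subset_of_ncard_le hmaps.image_subset ?_
    rw [ncard_image_of_injective _ w.injective, ncard_range_of_injective (c.embedding i).injective,
      ncard_range_of_injective (d.embedding j').injective, Nat.card_fin, Nat.card_fin, hsize]
  refine ⟨i, hsize.symm, ?_, ?_⟩
  · rw [← himage]
    rintro _ ⟨x, hx, rfl⟩
    simpa using hx
  · rw [← himage]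
    rintro _ ⟨x, hx, rfl⟩ _ ⟨y, hy, rfl⟩ hxy
    simpa using (hmono.lt_iff_lt hx hy).1 hxy


theorem exists_mapsBlocksMonotone (h : c.blocks.Perm d.blocks) :
    ∃ w : Equiv.Perm (Fin n), c.MapsBlocksMonotone d w := by
  let σ : Fin c.length ≃ Fin d.length :=
    ⟨h.idxBij, h.symm.idxBij, h.idxBij_rightInverse_idxBij_symm,
      h.idxBij_leftInverse_idxBij_symm⟩
  have hσ (i : Fin c.length) : d.blocksFun (σ i) = c.blocksFun i :=
    h.getElem_idxBij_eq_getElem i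
  let w : Equiv.Perm (Fin n) := c.blocksFinEquiv.symm.trans
    ((Equiv.sigmaCongr σ fun i => finCongr (hσ i).symm).trans d.blocksFinEquiv)
  have hw (i : Fin c.length) (t : Fin (c.blocksFun i)) :
      w (c.embedding i t) = d.embedding (σ i) (Fin.cast (hσ i).symm t) := by
    have : c.blocksFinEquiv.symm (c.embedding i t) = ⟨i, t⟩ := c.blocksFinEquiv.symm_apply_eq.2 rfl
    simp only [w, Equiv.trans_apply, this]
    rfl
  refine ⟨w, fun i => ⟨σ i, hσ i, ?_, ?_⟩⟩
  · rintro _ ⟨t, rfl⟩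
    exact ⟨_, (hw i t).symm⟩
  · rintro _ ⟨t, rfl⟩ _ ⟨t', rfl⟩ htt'
    simpa [hw] using htt'

end Composition

/-- If the compositions `μ` and `ν` of `n` have the same underlying partition, then
there is a permutation `w` sending each block of `μ` onto a block of `ν` of the same
size preserving the order of the elements, and for every such `w` one has
`w·G_μ = G_ν·w` as subsets of `S_n` (composition is right to left, so `w·g = w * g`). -/
theorem stmt17 (n : ℕ) (μ ν : List ℕ)
    (hμpos : ∀ x ∈ μ, 0 < x) (hνpos : ∀ x ∈ ν, 0 < x)
    (hμsum : μ.sum = n) (hνsum : ν.sum = n)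
    (hperm : (↑μ : Multiset ℕ) = (↑ν : Multiset ℕ)) :
    (∃ w : Equiv.Perm (Fin n), BlockOrderMap n μ ν w) ∧
    ∀ w : Equiv.Perm (Fin n), BlockOrderMap n μ ν w →
      (fun g => w * g) '' {g : Equiv.Perm (Fin n) | BlockOrderMap n μ μ g} =
        (fun g => g * w) '' {g : Equiv.Perm (Fin n) | BlockOrderMap n ν ν g} := by
  let c : Composition n := ⟨μ, hμpos _, hμsum⟩
  let d : Composition n := ⟨ν, hνpos _, hνsum⟩
  refine ⟨?_, fun w hw => ?_⟩
  · obtain ⟨w, hw⟩ := c.exists_mapsBlocksMonotone d (Multiset.coe_eq_coe.1 hperm)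
    exact ⟨w, (c.blockOrderMap_iff d w).2 hw⟩
  have hw' : BlockOrderMap n ν μ w⁻¹ :=
    (d.blockOrderMap_iff c _).2 ((c.blockOrderMap_iff d w).1 hw).inv
  refine Set.image_mul_left_eq_image_mul_right (fun g hg => ?_) (fun g hg => ?_)
  · rw [mul_assoc]
    exact (hw'.mul hg).mul hw
  · rw [mul_assoc]
    exact (hw.mul hg).mul hw'
end
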